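/- The improper integral ∫₀^∞ (exp(ψ(ζ)) − 1) dζ converges and equals 2√2·B/(√(8 + B²) + 2√2 − B). -/

import Mathlib

open Real Set Filter MeasureTheory

/-- The paper's explicit Debye-layer solution for positive scaled wall charge
`B > 0`: `ψ(ζ) = 2 log(coth((ζ + c)/√2))` with
`c = (1/√2)·arsinh(2√2/B)`, written with `coth = cosh/sinh`. -/
noncomputable def psiDpos (B ζ : ℝ) : ℝ :=
  2 * Real.log
    (Real.cosh ((ζ + (1 / Real.sqrt 2) * Real.arsinh (2 * Real.sqrt 2 / B)) / Real.sqrt 2) /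
     Real.sinh ((ζ + (1 / Real.sqrt 2) * Real.arsinh (2 * Real.sqrt 2 / B)) / Real.sqrt 2))

/-! Since `e^ψ - 1 = coth² u - 1 = 1 / sinh² u` with `u = (ζ + c)/√2`, and `-√2 coth u` is an
antiderivative of that in `ζ`, the integral equals `√2 (coth (c/√2) - 1)`. Here `c/√2 = arsinh(2√2/B)/2`,
and the half-argument formula `coth (a/2) = (cosh a + 1)/sinh a` together with
`cosh (arsinh x) = √(1 + x²)` turns this into the closed form. -/

open Topology

noncomputable def coth (x : ℝ) : ℝ := cosh x / sinh x

lemma coth_pos {x : ℝ} (hx : 0 < x) : 0 < coth x :=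
  div_pos (cosh_pos x) (sinh_pos_iff.mpr hx)

lemma coth_sq_sub_one {x : ℝ} (hx : x ≠ 0) : coth x ^ 2 - 1 = (sinh x ^ 2)⁻¹ := by
  have hs : sinh x ≠ 0 := sinh_ne_zero.mpr hx
  rw [coth]
  field_simp
  linear_combination cosh_sq_sub_sinh_sq x

lemma coth_sub_one {x : ℝ} (hx : x ≠ 0) : coth x - 1 = 2 / (exp (2 * x) - 1) := by
  have hs : sinh x ≠ 0 := sinh_ne_zero.mpr hx
  have he : exp (2 * x) - 1 ≠ 0 := by
    rw [sub_ne_zero, Ne, exp_eq_one_iff]; exact mul_ne_zero two_ne_zero hx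
  have hsq : exp (2 * x) = exp x * exp x := by rw [two_mul, exp_add]
  have hinv : exp (-x) * exp x = 1 := by rw [← exp_add, neg_add_cancel, exp_zero]
  rw [coth, div_sub_one hs, cosh_sub_sinh, div_eq_div_iff hs he, sinh_eq]
  linear_combination exp (-x) * hsq + exp x * hinv

lemma tendsto_coth_atTop : Tendsto coth atTop (𝓝 1) := by
  have hexp : Tendsto (fun x : ℝ => exp (2 * x) - 1) atTop atTop :=
    tendsto_atTop_add_const_right _ _ (tendsto_exp_atTop.comp (tendsto_id.const_mul_atTop two_pos))
  have h := (tendsto_const_nhds (x := (2 : ℝ))).div_atTop hexp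
  have hsub : Tendsto (fun x => coth x - 1) atTop (𝓝 0) :=
    h.congr' (eventually_gt_atTop 0 |>.mono fun x hx => (coth_sub_one hx.ne').symm)
  simpa using hsub.add_const 1

lemma hasDerivAt_coth {x : ℝ} (hx : x ≠ 0) : HasDerivAt coth (-(sinh x ^ 2)⁻¹) x := by
  have hs : sinh x ≠ 0 := sinh_ne_zero.mpr hx
  refine ((hasDerivAt_cosh x).div (hasDerivAt_sinh x) hs).congr_deriv ?_
  field_simp
  linear_combination -cosh_sq_sub_sinh_sq x

lemma coth_half {x : ℝ} (hx : x ≠ 0) : coth (x / 2) = (cosh x + 1) / sinh x := by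
  have hs : sinh (x / 2) ≠ 0 := sinh_ne_zero.mpr (div_ne_zero hx two_ne_zero)
  have hx2 : x = 2 * (x / 2) := by ring
  rw [hx2, cosh_two_mul, sinh_two_mul, coth, ← hx2]
  field_simp
  linear_combination cosh_sq_sub_sinh_sq (x / 2)

lemma coth_half_arsinh {x : ℝ} (hx : x ≠ 0) : coth (arsinh x / 2) = (√(1 + x ^ 2) + 1) / x := by
  rw [coth_half (arsinh_eq_zero_iff.not.mpr hx), cosh_arsinh, sinh_arsinh]

lemma integral_Ioi_inv_sinh_sq {k c : ℝ} (hk : 0 < k) (hc : 0 < c) :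
    IntegrableOn (fun ζ => (sinh ((ζ + c) / k) ^ 2)⁻¹) (Ioi 0) ∧
      ∫ ζ in Ioi (0 : ℝ), (sinh ((ζ + c) / k) ^ 2)⁻¹ = k * (coth (c / k) - 1) := by
  have hderiv : ∀ ζ ∈ Ici (0 : ℝ),
      HasDerivAt (fun ζ => -k * coth ((ζ + c) / k)) (sinh ((ζ + c) / k) ^ 2)⁻¹ ζ := by
    intro ζ hζ
    have hu : (ζ + c) / k ≠ 0 := (div_pos (by linarith [mem_Ici.mp hζ]) hk).ne'
    refine (((hasDerivAt_coth hu).comp ζ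
      (((hasDerivAt_id ζ).add_const c).div_const k)).const_mul (-k)).congr_deriv ?_
    field_simp
  have hnonneg : ∀ ζ ∈ Ioi (0 : ℝ), 0 ≤ (sinh ((ζ + c) / k) ^ 2)⁻¹ := fun _ _ => by positivity
  have hlim : Tendsto (fun ζ => -k * coth ((ζ + c) / k)) atTop (𝓝 (-k * 1)) :=
    (tendsto_coth_atTop.comp
      ((tendsto_atTop_add_const_right _ c tendsto_id).atTop_div_const hk)).const_mul (-k)
  refine ⟨integrableOn_Ioi_deriv_of_nonneg' hderiv hnonneg hlim, ?_⟩
  rw [integral_Ioi_of_hasDerivAt_of_nonneg' hderiv hnonneg hlim, zero_add]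
  ring

lemma exp_psiDpos_sub_one {B ζ : ℝ} (hB : 0 < B) (hζ : 0 ≤ ζ) :
    exp (psiDpos B ζ) - 1 =
      (sinh ((ζ + (1 / √2) * arsinh (2 * √2 / B)) / √2) ^ 2)⁻¹ := by
  have hu : 0 < (ζ + (1 / √2) * arsinh (2 * √2 / B)) / √2 := by
    have : 0 < arsinh (2 * √2 / B) := arsinh_pos_iff.mpr (by positivity)
    positivity
  rw [psiDpos, two_mul, exp_add, ← coth, exp_log (coth_pos hu), ← sq, coth_sq_sub_one hu.ne']

/-- The Debye-layer correction integral for `G₂`: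
`∫₀^∞ (e^{ψ(ζ)} - 1) dζ = 2√2·B/(√(8+B²) + 2√2 - B)`. -/
theorem stmt_9 (B : ℝ) (hB : 0 < B) :
    IntegrableOn (fun ζ => Real.exp (psiDpos B ζ) - 1) (Set.Ioi 0) ∧
    (∫ ζ in Set.Ioi (0:ℝ), (Real.exp (psiDpos B ζ) - 1)) =
      2 * Real.sqrt 2 * B / (Real.sqrt (8 + B ^ 2) + 2 * Real.sqrt 2 - B) := by
  have hsqrt2 : 0 < √2 := by positivity
  have hc : 0 < (1 / √2) * arsinh (2 * √2 / B) := by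
    have : 0 < arsinh (2 * √2 / B) := arsinh_pos_iff.mpr (by positivity)
    positivity
  obtain ⟨hint, hval⟩ := integral_Ioi_inv_sinh_sq hsqrt2 hc
  have hpsi : EqOn (fun ζ => exp (psiDpos B ζ) - 1)
      (fun ζ => (sinh ((ζ + (1 / √2) * arsinh (2 * √2 / B)) / √2) ^ 2)⁻¹) (Ioi 0) :=
    fun ζ hζ => exp_psiDpos_sub_one hB (le_of_lt hζ)
  refine ⟨hint.congr_fun hpsi.symm measurableSet_Ioi, ?_⟩
  have hhalf : (1 / √2) * arsinh (2 * √2 / B) / √2 = arsinh (2 * √2 / B) / 2 := by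
    field_simp
    rw [sq_sqrt zero_le_two]
  have hS : √(1 + (2 * √2 / B) ^ 2) = √(8 + B ^ 2) / B := by
    have h : 1 + (2 * √2 / B) ^ 2 = (8 + B ^ 2) / B ^ 2 := by
      field_simp
      rw [sq_sqrt zero_le_two]
      ring
    rw [h, sqrt_div' _ (sq_nonneg B), sqrt_sq hB.le]
  have hBS : B < √(8 + B ^ 2) := lt_sqrt hB.le |>.mpr (by linarith)
  rw [setIntegral_congr_fun measurableSet_Ioi hpsi, hval, hhalf,
    coth_half_arsinh (by positivity), hS, eq_div_iff (by linarith)]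
  field_simp
  linear_combination sq_sqrt (by positivity : (0 : ℝ) ≤ 8 + B ^ 2) - 4 * sq_sqrt zero_le_two
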